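/- (Klainerman–Sobolev type inequality) For t > 0 and any Schwartz function u: ℝ → ℂ (with the time t fixed), ‖u‖_{L^∞}² ≤ C · t⁻¹ · ‖u‖_{L²} · ‖Lu‖_{L²}, where Lu = xu + 2it u' and C is a universal constant. -/

import Mathlib

open Complex ComplexConjugate MeasureTheory Filter Topology SchwartzMap

/-!
`|u|²` vanishes at `+∞`, so `|u(x)|²` is bounded by `∫ |(|u|²)'| = ∫ 2 |Re (ū u')|`.
Since `Im (ū · y u) = 0`, we have `2t Re (ū u') = Im (ū · Lu)`, hence
`|u(x)|² ≤ t⁻¹ ∫ |u| |Lu|`, and Cauchy–Schwarz finishes with `C = 1`.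
-/

theorem norm_le_integral_norm_of_hasDerivAt_of_tendsto_atTop_zero {E : Type*}
    [NormedAddCommGroup E] [NormedSpace ℝ E] [CompleteSpace E] {f f' : ℝ → E}
    (hf : ∀ y, HasDerivAt f (f' y) y) (hf' : Integrable f') (hlim : Tendsto f atTop (𝓝 0))
    (x : ℝ) : ‖f x‖ ≤ ∫ y, ‖f' y‖ := by
  have hFTC : ∫ y in Set.Ioi x, f' y = 0 - f x :=
    integral_Ioi_of_hasDerivAt_of_tendsto' (fun y _ => hf y) hf'.integrableOn hlim
  calc ‖f x‖ = ‖∫ y in Set.Ioi x, f' y‖ := by rw [hFTC, zero_sub, norm_neg]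
    _ ≤ ∫ y in Set.Ioi x, ‖f' y‖ := norm_integral_le_integral_norm _
    _ ≤ ∫ y, ‖f' y‖ := setIntegral_le_integral hf'.norm (.of_forall fun _ => norm_nonneg _)

theorem integral_norm_mul_norm_le_of_memLp_two {α E : Type*} [MeasurableSpace α]
    {μ : Measure α} [NormedAddCommGroup E] {f g : α → E} (hf : MemLp f 2 μ) (hg : MemLp g 2 μ) :
    ∫ a, ‖f a‖ * ‖g a‖ ∂μ ≤
      (∫ a, ‖f a‖ ^ 2 ∂μ) ^ (1 / 2 : ℝ) * (∫ a, ‖g a‖ ^ 2 ∂μ) ^ (1 / 2 : ℝ) := by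
  have h := integral_mul_norm_le_Lp_mul_Lq (f := f) (g := g) (μ := μ) .two_two
    (by rwa [ENNReal.ofReal_ofNat]) (by rwa [ENNReal.ofReal_ofNat])
  simpa only [Real.rpow_two] using h

theorem two_mul_inner_eq_inv_mul_im (z w : ℂ) (y : ℝ) {t : ℝ} (ht : t ≠ 0) :
    2 * inner ℝ z w = t⁻¹ * (conj z * (y * z + 2 * I * t * w)).im := by
  simp only [Complex.inner, mul_im, mul_re, add_im, add_re, conj_re, conj_im, ofReal_re,
    ofReal_im, I_re, I_im, re_ofNat, im_ofNat]
  field_simp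
  ring

theorem norm_two_mul_inner_le (z w : ℂ) (y : ℝ) {t : ℝ} (ht : 0 < t) :
    ‖2 * inner ℝ z w‖ ≤ t⁻¹ * (‖z‖ * ‖y * z + 2 * I * t * w‖) := by
  rw [two_mul_inner_eq_inv_mul_im z w y ht.ne', norm_mul, Real.norm_of_nonneg (by positivity)]
  gcongr
  calc ‖(conj z * (y * z + 2 * I * t * w)).im‖ ≤ ‖conj z * (y * z + 2 * I * t * w)‖ :=
        abs_im_le_norm _
    _ = ‖z‖ * ‖y * z + 2 * I * t * w‖ := by rw [norm_mul, RCLike.norm_conj]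

namespace SchwartzMap

noncomputable def galileanVectorField (t : ℝ) : 𝓢(ℝ, ℂ) →L[ℂ] 𝓢(ℝ, ℂ) :=
  smulLeftCLM ℂ (fun x : ℝ => (x : ℂ)) + (2 * I * t) • derivCLM ℂ ℂ

theorem galileanVectorField_apply (t : ℝ) (u : 𝓢(ℝ, ℂ)) (x : ℝ) :
    galileanVectorField t u x = x * u x + 2 * I * t * deriv u x := by
  have hx : Function.HasTemperateGrowth fun x : ℝ => (x : ℂ) := ofRealCLM.hasTemperateGrowth
  simp [galileanVectorField, smulLeftCLM_apply_apply hx]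

end SchwartzMap

theorem klainerman_sobolev :
    ∃ C : ℝ, 0 < C ∧ ∀ (t : ℝ), 0 < t → ∀ u : SchwartzMap ℝ ℂ, ∀ x : ℝ,
      ‖u x‖ ^ 2 ≤ C * t⁻¹ *
        (∫ y : ℝ, ‖u y‖ ^ 2) ^ ((1 : ℝ) / 2) *
        (∫ y : ℝ, ‖(y : ℂ) * u y + 2 * I * (t : ℂ) * deriv u y‖ ^ 2) ^ ((1 : ℝ) / 2) := by
  refine ⟨1, one_pos, fun t ht u x => ?_⟩
  set Lu := galileanVectorField t u
  have hLu : ∀ y : ℝ, Lu y = y * u y + 2 * I * t * deriv u y := galileanVectorField_apply t u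
  have hbound (y : ℝ) : ‖2 * inner ℝ (u y) (deriv u y)‖ ≤ t⁻¹ * (‖u y‖ * ‖Lu y‖) := by
    rw [hLu]
    exact norm_two_mul_inner_le _ _ y ht
  have hint : Integrable fun y => t⁻¹ * (‖u y‖ * ‖Lu y‖) :=
    ((u.memLp 2).norm.integrable_mul (Lu.memLp 2).norm).const_mul _
  have hderiv (y : ℝ) : HasDerivAt (‖u ·‖ ^ 2) (2 * inner ℝ (u y) (deriv u y)) y :=
    u.differentiableAt.hasDerivAt.norm_sq
  have hderiv_int : Integrable fun y => 2 * inner ℝ (u y) (deriv u y) :=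
    hint.mono' (by fun_prop) (.of_forall hbound)
  have hlim : Tendsto (‖u ·‖ ^ 2) atTop (𝓝 0) := by
    simpa using (u.tendsto_cocompact.mono_left atTop_le_cocompact).norm.pow 2
  calc ‖u x‖ ^ 2 = ‖‖u x‖ ^ 2‖ := by rw [norm_pow, norm_norm]
    _ ≤ ∫ y, ‖2 * inner ℝ (u y) (deriv u y)‖ :=
      norm_le_integral_norm_of_hasDerivAt_of_tendsto_atTop_zero hderiv hderiv_int hlim x
    _ ≤ ∫ y, t⁻¹ * (‖u y‖ * ‖Lu y‖) := integral_mono hderiv_int.norm hint hbound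
    _ = t⁻¹ * ∫ y, ‖u y‖ * ‖Lu y‖ := integral_const_mul _ _
    _ ≤ t⁻¹ * ((∫ y, ‖u y‖ ^ 2) ^ (1 / 2 : ℝ) * (∫ y, ‖Lu y‖ ^ 2) ^ (1 / 2 : ℝ)) := by
      gcongr
      exact integral_norm_mul_norm_le_of_memLp_two (u.memLp 2) (Lu.memLp 2)
    _ = _ := by simp only [hLu]; ring
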